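/- Let K be a subfield of Q̄. Then G = span_ℚ G_K ⊕ E_K; that is, for every α ∈ G there exist a unique β ∈ span_ℚ G_K and a unique γ ∈ E_K such that α = βγ. -/

import Mathlib

noncomputable section

/-- A fixed algebraic closure of `ℚ`. -/
abbrev Qbar : Type := AlgebraicClosure ℚ

/-- The primitive integer minimal polynomial of an algebraic number. -/
noncomputable def intMinpoly (α : Qbar) : Polynomial ℤ :=
  (IsLocalization.integerNormalization (nonZeroDivisors ℤ) (minpoly ℚ α)).primPart

/-- The absolute logarithmic Weil height of an algebraic number, defined via the
(logarithmic) Mahler measure of its primitive integer minimal polynomial. -/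
noncomputable def weilHeight (α : Qbar) : ℝ :=
  ((minpoly ℚ α).natDegree : ℝ)⁻¹ *
    (Real.log |((intMinpoly α).leadingCoeff : ℝ)| +
      (((intMinpoly α).map (Int.castRingHom ℂ)).roots.map
        (fun z => Real.log (max 1 ‖z‖))).sum)

/-- `σ` is an automorphism of `Q̄` fixing `K` pointwise, i.e. `σ ∈ Aut(Q̄/K)`. -/
def fixes (K : Subfield Qbar) (σ : Qbar ≃+* Qbar) : Prop := ∀ x ∈ K, σ x = x

/-- The group `Q̄^×`. -/
abbrev Qx : Type := Qbarˣ

/-- `G = Q̄^× / Tor(Q̄^×)`. -/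
abbrev GG : Type := Qx ⧸ CommGroup.torsion Qx

/-- The Weil height descends to `G`: since `h` is constant on cosets of the torsion
subgroup, the infimum below equals the common value of `h` at any representative. -/
noncomputable def hG (x : GG) : ℝ :=
  sInf {r : ℝ | ∃ u : Qx, (QuotientGroup.mk u : GG) = x ∧ r = weilHeight (u : Qbar)}

/-- The image `G_K` of `K^×` in `G`. -/
def GK (K : Subfield Qbar) : Set GG :=
  {x | ∃ u : Qx, (u : Qbar) ∈ K ∧ (QuotientGroup.mk u : GG) = x}

/-- `span_ℚ G_K = { β ∈ G : β^m ∈ G_K for some nonzero integer m }`. -/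
def spanGK (K : Subfield Qbar) : Set GG :=
  {x | ∃ m : ℤ, m ≠ 0 ∧ x ^ m ∈ GK K}

/-- The action of an automorphism of `Q̄` on `G = Q̄^×/Tor(Q̄^×)`. -/
def autG (σ : Qbar ≃+* Qbar) : GG →* GG :=
  QuotientGroup.map _ _ (Units.map (σ : Qbar →* Qbar))
    (fun u hu => by
      rw [Subgroup.mem_comap]
      rw [CommGroup.mem_torsion] at hu ⊢
      exact MonoidHom.isOfFinOrder _ hu)

/-- The orbit of `x ∈ G` under the action of `Aut(Q̄/K)` on `G`. -/
def OrbG (K : Subfield Qbar) (x : GG) : Set GG :=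
  {y | ∃ σ : Qbar ≃+* Qbar, fixes K σ ∧ y = autG σ x}

/-- `E_K = { α ∈ G : ∏_{β ∈ Orb_K(α)} β = 1 }`. -/
def EK (K : Subfield Qbar) : Set GG :=
  {x | (∏ᶠ y ∈ OrbG K x, y) = 1}

/-!
`span_ℚ G_K` is the subgroup of `Aut(Q̄/K)`-invariants of `G`: if `σ u / u` is a root of unity for
every `σ`, a common power `u ^ m` is fixed, hence lies in `K`. For an invariant `c`, the orbit of
`x c` is the orbit of `x` translated by `c`, so `∏ Orb_K(x c) = ∏ Orb_K(x) · c ^ #Orb_K(x)`.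
Existence: `∏ Orb_K(α)` is invariant, hence so is its `n`-th root `β` (`n = #Orb_K(α)`, `G` is
divisible and torsion-free), and then `∏ Orb_K(α β⁻¹) = 1`. Uniqueness: an invariant `c` with
`x, x c ∈ E_K` has `c ^ n = 1`, so `c = 1`.
-/

-- `Qbar` carries two `ℚ`-algebra structures, `AlgebraicClosure`'s and the one of any field of
-- characteristic zero; they agree since `Algebra ℚ Qbar` is a subsingleton.
instance : Algebra.IsAlgebraic ℚ Qbar := by
  convert AlgebraicClosure.isAlgebraic ℚ
  · rfl
  · exact Subsingleton.elim _ _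

instance (K : Subfield Qbar) : IsAlgClosure K Qbar := ⟨inferInstance, .tower_top (K := ℚ) K⟩

theorem Set.Finite.exists_pos_pow_eq_one {M : Type*} [Monoid M] {S : Set M} (hS : S.Finite)
    (h : ∀ s ∈ S, IsOfFinOrder s) : ∃ m : ℕ, 0 < m ∧ ∀ s ∈ S, s ^ m = 1 :=
  ⟨∏ s ∈ hS.toFinset, orderOf s,
    Finset.prod_pos fun s hs => (h s (hS.mem_toFinset.mp hs)).orderOf_pos,
    fun _ hs => orderOf_dvd_iff_pow_eq_one.mp (Finset.dvd_prod_of_mem _ (hS.mem_toFinset.mpr hs))⟩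

theorem finprod_mem_mul_const {α M : Type*} [CommMonoid M] {s : Set α} (hs : s.Finite)
    (f : α → M) (c : M) : ∏ᶠ i ∈ s, f i * c = (∏ᶠ i ∈ s, f i) * c ^ s.ncard := by
  rw [finprod_mem_mul_distrib hs, finprod_mem_eq_finite_toFinset_prod (fun _ => c) hs,
    Finset.prod_const, Set.ncard_eq_toFinset_card _ hs]

namespace fixes

variable {K : Subfield Qbar} {σ τ : Qbar ≃+* Qbar}

theorem refl : fixes K (RingEquiv.refl Qbar) := fun _ _ => rfl

theorem trans (hσ : fixes K σ) (hτ : fixes K τ) : fixes K (σ.trans τ) := fun x hx => by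
  simp only [RingEquiv.coe_trans, Function.comp_apply, hσ x hx, hτ x hx]

theorem symm (hσ : fixes K σ) : fixes K σ.symm := fun x hx =>
  σ.injective (by rw [RingEquiv.apply_symm_apply, hσ x hx])

def toAlgEquiv (hσ : fixes K σ) : Qbar ≃ₐ[K] Qbar :=
  { σ with commutes' := fun k => hσ k k.2 }

theorem apply_mem_rootSet (hσ : fixes K σ) (a : Qbar) : σ a ∈ (minpoly K a).rootSet Qbar :=
  (isConjRoot_iff_mem_minpoly_rootSet (Algebra.IsIntegral.isIntegral a)).mp
    (isConjRoot_of_algEquiv a hσ.toAlgEquiv)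

end fixes

theorem mem_of_forall_fixes_apply_eq {K : Subfield Qbar} {b : Qbar}
    (h : ∀ σ : Qbar ≃+* Qbar, fixes K σ → σ b = b) : b ∈ K := by
  obtain ⟨k, rfl⟩ := (InfiniteGalois.mem_range_algebraMap_iff_fixed (k := K) b).mpr
    fun f => h f.toRingEquiv fun x hx => f.commutes ⟨x, hx⟩
  exact k.2

theorem finite_units_conjugates (K : Subfield Qbar) (u : Qx) :
    {v : Qx | ∃ σ : Qbar ≃+* Qbar, fixes K σ ∧ Units.map (σ : Qbar →* Qbar) u = v}.Finite :=
  ((minpoly K (u : Qbar)).rootSet_finite Qbar).preimage Units.val_injective.injOn |>.subset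
    fun _ ⟨_, hσ, hv⟩ => hv ▸ hσ.apply_mem_rootSet (u : Qbar)

theorem autG_mk (σ : Qbar ≃+* Qbar) (u : Qx) :
    autG σ (QuotientGroup.mk u) = QuotientGroup.mk (Units.map (σ : Qbar →* Qbar) u) := rfl

theorem autG_autG (σ τ : Qbar ≃+* Qbar) (x : GG) : autG τ (autG σ x) = autG (σ.trans τ) x := by
  induction x using QuotientGroup.induction_on with
  | H u => rfl

theorem autG_refl (x : GG) : autG (RingEquiv.refl Qbar) x = x := by
  induction x using QuotientGroup.induction_on with
  | H u => rfl

theorem autG_injective (σ : Qbar ≃+* Qbar) : Function.Injective (autG σ) :=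
  Function.LeftInverse.injective (g := autG σ.symm) fun x => by
    rw [autG_autG, RingEquiv.self_trans_symm, autG_refl]

def fixedG (K : Subfield Qbar) : Subgroup GG where
  carrier := {x | ∀ σ : Qbar ≃+* Qbar, fixes K σ → autG σ x = x}
  mul_mem' hx hy σ hσ := by rw [map_mul, hx σ hσ, hy σ hσ]
  one_mem' σ _ := map_one (autG σ)
  inv_mem' hx σ hσ := by rw [map_inv, hx σ hσ]

section fixedG

variable {K : Subfield Qbar}

theorem mem_fixedG_of_zpow_mem {x : GG} {m : ℤ} (hm : m ≠ 0) (h : x ^ m ∈ fixedG K) :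
    x ∈ fixedG K := fun σ hσ => zpow_left_injective hm (by simpa using h σ hσ)

theorem GK_subset_fixedG : GK K ⊆ fixedG K := by
  rintro _ ⟨u, hu, rfl⟩ σ hσ
  exact congrArg QuotientGroup.mk (Units.ext (hσ _ hu))

theorem fixedG_subset_spanGK : (fixedG K : Set GG) ⊆ spanGK K := by
  rintro x hx
  obtain ⟨u, rfl⟩ := QuotientGroup.mk_surjective x
  have hratio_tors : ∀ σ : Qbar ≃+* Qbar, fixes K σ →
      IsOfFinOrder (Units.map (σ : Qbar →* Qbar) u * u⁻¹) := fun σ hσ => by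
    rw [← CommGroup.mem_torsion, ← QuotientGroup.eq_one_iff, QuotientGroup.mk_mul, ← autG_mk,
      hx σ hσ, QuotientGroup.mk_inv, mul_inv_cancel]
  obtain ⟨m, hm, hratio⟩ := ((finite_units_conjugates K u).image (· * u⁻¹)).exists_pos_pow_eq_one
    (by rintro _ ⟨_, ⟨σ, hσ, rfl⟩, rfl⟩; exact hratio_tors σ hσ)
  have hfix : ∀ σ : Qbar ≃+* Qbar, fixes K σ → σ ((u : Qbar) ^ m) = (u : Qbar) ^ m := by
    intro σ hσ
    have h := hratio _ ⟨_, ⟨σ, hσ, rfl⟩, rfl⟩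
    rw [mul_pow, inv_pow, mul_inv_eq_one] at h
    simpa using congrArg Units.val h
  refine ⟨m, by exact_mod_cast hm.ne', u ^ m, ?_, by rw [zpow_natCast, QuotientGroup.mk_pow]⟩
  simpa using mem_of_forall_fixes_apply_eq hfix

theorem spanGK_eq_fixedG : spanGK K = fixedG K := by
  refine subset_antisymm ?_ fixedG_subset_spanGK
  rintro x ⟨m, hm, hx⟩
  exact mem_fixedG_of_zpow_mem hm (GK_subset_fixedG hx)

end fixedG

section OrbG

variable (K : Subfield Qbar)

theorem mem_OrbG_self (x : GG) : x ∈ OrbG K x :=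
  ⟨RingEquiv.refl Qbar, fixes.refl, (autG_refl x).symm⟩

theorem OrbG_finite (x : GG) : (OrbG K x).Finite := by
  obtain ⟨u, rfl⟩ := QuotientGroup.mk_surjective x
  refine ((finite_units_conjugates K u).image QuotientGroup.mk).subset ?_
  rintro _ ⟨σ, hσ, rfl⟩
  exact ⟨_, ⟨σ, hσ, rfl⟩, rfl⟩

theorem ncard_OrbG_pos (x : GG) : 0 < (OrbG K x).ncard :=
  (Set.ncard_pos (OrbG_finite K x)).mpr ⟨x, mem_OrbG_self K x⟩

theorem image_autG_OrbG {τ : Qbar ≃+* Qbar} (hτ : fixes K τ) (x : GG) :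
    autG τ '' OrbG K x = OrbG K x := by
  ext y
  constructor
  · rintro ⟨_, ⟨σ, hσ, rfl⟩, rfl⟩
    exact ⟨σ.trans τ, hσ.trans hτ, autG_autG σ τ x⟩
  · rintro ⟨σ, hσ, rfl⟩
    refine ⟨_, ⟨σ.trans τ.symm, hσ.trans hτ.symm, rfl⟩, ?_⟩
    rw [autG_autG, show (σ.trans τ.symm).trans τ = σ from RingEquiv.ext fun _ => by simp]

theorem finprod_OrbG_mem_fixedG (x : GG) : ∏ᶠ y ∈ OrbG K x, y ∈ fixedG K := fun τ hτ => by
  conv_rhs => rw [← image_autG_OrbG K hτ x]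
  rw [MonoidHom.map_finprod_mem _ _ (OrbG_finite K x), finprod_mem_image (autG_injective τ).injOn]

theorem OrbG_mul_of_mem_fixedG (x : GG) {c : GG} (hc : c ∈ fixedG K) :
    OrbG K (x * c) = (· * c) '' OrbG K x := by
  ext y
  constructor
  · rintro ⟨σ, hσ, rfl⟩
    exact ⟨autG σ x, ⟨σ, hσ, rfl⟩, by rw [map_mul, hc σ hσ]⟩
  · rintro ⟨_, ⟨σ, hσ, rfl⟩, rfl⟩
    exact ⟨σ, hσ, by rw [map_mul, hc σ hσ]⟩

theorem finprod_OrbG_mul_of_mem_fixedG (x : GG) {c : GG} (hc : c ∈ fixedG K) :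
    ∏ᶠ y ∈ OrbG K (x * c), y = (∏ᶠ y ∈ OrbG K x, y) * c ^ (OrbG K x).ncard := by
  rw [OrbG_mul_of_mem_fixedG K x hc, finprod_mem_image (mul_left_injective c).injOn,
    finprod_mem_mul_const (OrbG_finite K x)]

theorem eq_one_of_mem_EK_of_mul_mem_EK {x c : GG} (hc : c ∈ fixedG K) (hx : x ∈ EK K)
    (hxc : x * c ∈ EK K) : c = 1 := by
  have h : c ^ (OrbG K x).ncard = 1 := by
    simpa [EK, finprod_OrbG_mul_of_mem_fixedG K x hc, hx.out] using hxc.out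
  exact (pow_eq_one_iff_left (ncard_OrbG_pos K x).ne').mp h

end OrbG

theorem QuotientGroup.exists_pow_eq_of_isAlgClosed {F : Type*} [Field F] [IsAlgClosed F]
    {H : Subgroup Fˣ} (x : Fˣ ⧸ H) {n : ℕ} (hn : n ≠ 0) : ∃ y : Fˣ ⧸ H, y ^ n = x := by
  obtain ⟨u, rfl⟩ := QuotientGroup.mk_surjective x
  obtain ⟨b, hb⟩ := IsAlgClosed.exists_pow_nat_eq (u : F) (Nat.pos_of_ne_zero hn)
  have hb0 : b ≠ 0 := by
    rintro rfl
    exact u.ne_zero (by rw [← hb, zero_pow hn])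
  exact ⟨QuotientGroup.mk (Units.mk0 b hb0), by
    rw [← QuotientGroup.mk_pow]; exact congrArg _ (Units.ext (by simpa using hb))⟩

/-- Theorem 6.3 (direct sum decomposition): `G = span_ℚ G_K ⊕ E_K`, i.e. every `α ∈ G`
is uniquely a product `α = βγ` with `β ∈ span_ℚ G_K` and `γ ∈ E_K`. -/
theorem stmt15 (K : Subfield Qbar) (α : GG) :
    ∃! p : GG × GG, p.1 ∈ spanGK K ∧ p.2 ∈ EK K ∧ α = p.1 * p.2 := by
  rw [spanGK_eq_fixedG]
  have hn : (OrbG K α).ncard ≠ 0 := (ncard_OrbG_pos K α).ne'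
  obtain ⟨β, hβ⟩ := QuotientGroup.exists_pow_eq_of_isAlgClosed (∏ᶠ y ∈ OrbG K α, y) hn
  have hβfix : β ∈ fixedG K := mem_fixedG_of_zpow_mem (m := (OrbG K α).ncard)
    (by exact_mod_cast hn) (by simpa [hβ] using finprod_OrbG_mem_fixedG K α)
  have hγ : α * β⁻¹ ∈ EK K := by
    show ∏ᶠ y ∈ OrbG K (α * β⁻¹), y = 1
    rw [finprod_OrbG_mul_of_mem_fixedG K α (inv_mem hβfix), inv_pow, hβ, mul_inv_cancel]
  refine ⟨(β, α * β⁻¹), ⟨hβfix, hγ, by rw [mul_comm α, mul_inv_cancel_left]⟩, ?_⟩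
  rintro ⟨β', γ'⟩ ⟨hβ', hγ', rfl⟩
  have hδ : β' * β⁻¹ = 1 := eq_one_of_mem_EK_of_mul_mem_EK K (mul_mem hβ' (inv_mem hβfix)) hγ'
    (by rwa [mul_comm β', mul_assoc] at hγ)
  obtain rfl : β' = β := mul_inv_eq_one.mp hδ
  simp
end
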